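/- Let n ≥ 1 and let Q_1, …, Q_{n²} be n×n complex Hermitian matrices forming an orthonormal family with respect to the real inner product ⟨A,B⟩ = Re tr(A Bᴴ). Then for every index α ∈ {1, …, n²}, Σ_{β=1}^{n²} ‖[Q_α, Q_β]‖² ≤ 2n. -/

import Mathlib

open Matrix

/-- Squared Frobenius norm of a complex matrix: `Re tr (A Aᴴ)`. -/
noncomputable def frobSq {n : ℕ} (A : Matrix (Fin n) (Fin n) ℂ) : ℝ :=
  ((A * Aᴴ).trace).re

/-- Real inner product on complex matrices: `Re tr (A Bᴴ)`. -/
noncomputable def minner {n : ℕ} (A B : Matrix (Fin n) (Fin n) ℂ) : ℝ :=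
  ((A * Bᴴ).trace).re

/-- Commutator of matrices. -/
noncomputable def mcomm {n : ℕ} (A B : Matrix (Fin n) (Fin n) ℂ) : Matrix (Fin n) (Fin n) ℂ :=
  A * B - B * A

namespace CommBd

variable {n : ℕ}

/-- Embedding of matrices into `EuclideanSpace`. -/
noncomputable def T (A : Matrix (Fin n) (Fin n) ℂ) : EuclideanSpace ℂ (Fin n × Fin n) :=
  WithLp.toLp 2 (fun p : Fin n × Fin n => A p.1 p.2)

lemma inner_T (A B : Matrix (Fin n) (Fin n) ℂ) :
    (inner ℝ (T A) (T B) : ℝ) = minner B A := by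
  simp only [PiLp.inner_apply, T, PiLp.toLp_apply, Complex.inner, minner, Matrix.trace, Matrix.mul_apply,
    Matrix.conjTranspose_apply, Matrix.diag_apply, Complex.re_sum, Fintype.sum_prod_type]
  refine Finset.sum_congr rfl fun i _ => Finset.sum_congr rfl fun k _ => ?_
  rw [starRingEnd_apply]

lemma frobSq_eq_sum (X : Matrix (Fin n) (Fin n) ℂ) :
    frobSq X = ∑ p : Fin n × Fin n, Complex.normSq (X p.1 p.2) := by
  simp only [frobSq, Matrix.trace, Matrix.mul_apply, Matrix.conjTranspose_apply,
    Matrix.diag_apply, Complex.re_sum, Fintype.sum_prod_type, Complex.mul_conj]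
  simp [Complex.normSq_apply, Complex.mul_re]

lemma frobSq_eq_minner (X : Matrix (Fin n) (Fin n) ℂ) : frobSq X = minner X X := rfl

lemma minner_comm (A B : Matrix (Fin n) (Fin n) ℂ) : minner A B = minner B A := by
  unfold minner
  rw [show B * Aᴴ = (A * Bᴴ)ᴴ by simp [Matrix.conjTranspose_mul], Matrix.trace_conjTranspose]
  simp [Complex.star_def]

/-- Bessel's inequality for the family `Q`. -/
lemma bessel {m : ℕ} (Q : Fin m → Matrix (Fin n) (Fin n) ℂ)
    (hON : ∀ a b, minner (Q a) (Q b) = if a = b then 1 else 0)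
    (X : Matrix (Fin n) (Fin n) ℂ) :
    ∑ β : Fin m, (minner (Q β) X) ^ 2 ≤ frobSq X := by
  have hv : Orthonormal ℝ (fun β => T (Q β)) := by
    rw [orthonormal_iff_ite]
    intro a b
    rw [inner_T, minner_comm, hON a b]
  have h := hv.sum_inner_products_le (x := T X) (s := Finset.univ)
  calc ∑ β : Fin m, (minner (Q β) X) ^ 2
      = ∑ β : Fin m, ‖(inner ℝ (T (Q β)) (T X) : ℝ)‖ ^ 2 := by
        refine Finset.sum_congr rfl fun β _ => ?_
        rw [inner_T, minner_comm, Real.norm_eq_abs, sq_abs]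
    _ ≤ ‖T X‖ ^ 2 := h
    _ = frobSq X := by
        rw [← real_inner_self_eq_norm_sq, inner_T, frobSq_eq_minner]

lemma trace_mul_single (X : Matrix (Fin n) (Fin n) ℂ) (i j : Fin n) :
    (X * single i j 1).trace = X j i := by
  rw [Matrix.trace, Finset.sum_eq_single j]
  · simp
  · intro b _ hb
    simp [Matrix.diag_apply, hb]
  · simp

lemma trace_single_mul (X : Matrix (Fin n) (Fin n) ℂ) (i j : Fin n) :
    (single i j 1 * X).trace = X j i := by
  rw [Matrix.trace, Finset.sum_eq_single i]
  · simp
  · intro b _ hb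
    simp [Matrix.diag_apply, hb]
  · simp

lemma single_conjTranspose (i j : Fin n) :
    (single i j (1 : ℂ))ᴴ = single j i 1 := by
  ext a b
  simp [Matrix.conjTranspose_apply, Matrix.single, Matrix.of_apply,
    apply_ite (starRingEnd ℂ), and_comm]

lemma herm_trace_conj (B M : Matrix (Fin n) (Fin n) ℂ) (hB : Bᴴ = B) :
    (B * Mᴴ).trace = star ((B * M).trace) := by
  rw [← Matrix.trace_conjTranspose, Matrix.conjTranspose_mul, hB, Matrix.trace_mul_comm]

lemma aux_re (z : ℂ) : (star (1 / 2 : ℂ) * (star z + z)).re = z.re := by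
  have : star (1 / 2 : ℂ) = 1 / 2 := by norm_num
  rw [this]
  simp [Complex.mul_re, Complex.add_re, Complex.add_im]
  ring

lemma aux_im (z : ℂ) : (star (Complex.I / 2 : ℂ) * (z - star z)).re = z.im := by
  have : star (Complex.I / 2 : ℂ) = -(Complex.I / 2) := by
    norm_num [Complex.ext_iff]
  rw [this]
  simp [Complex.mul_re, Complex.sub_re, Complex.sub_im, Complex.div_re, Complex.div_im]
  ring

lemma minner_re (B M : Matrix (Fin n) (Fin n) ℂ) (hB : Bᴴ = B) :
    minner B ((1 / 2 : ℂ) • (M + Mᴴ)) = ((B * M).trace).re := by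
  unfold minner
  rw [Matrix.conjTranspose_smul, Matrix.conjTranspose_add, Matrix.conjTranspose_conjTranspose,
    Matrix.mul_smul, Matrix.trace_smul, Matrix.mul_add, Matrix.trace_add,
    herm_trace_conj B M hB, smul_eq_mul]
  exact aux_re _

lemma minner_im (B M : Matrix (Fin n) (Fin n) ℂ) (hB : Bᴴ = B) :
    minner B ((Complex.I / 2 : ℂ) • (Mᴴ - M)) = ((B * M).trace).im := by
  unfold minner
  rw [Matrix.conjTranspose_smul, Matrix.conjTranspose_sub, Matrix.conjTranspose_conjTranspose,
    Matrix.mul_smul, Matrix.trace_smul, Matrix.mul_sub, Matrix.trace_sub,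
    herm_trace_conj B M hB, smul_eq_mul]
  exact aux_im _


lemma trace_BM (A B : Matrix (Fin n) (Fin n) ℂ) (i j : Fin n) :
    (B * (single j i 1 * A - A * single j i 1)).trace
      = (mcomm A B) i j := by
  rw [Matrix.mul_sub, Matrix.trace_sub,
    show B * (single j i 1 * A) = B * single j i 1 * A from
      (Matrix.mul_assoc _ _ _).symm,
    Matrix.trace_mul_comm (B * single j i 1) A, ← Matrix.mul_assoc,
    trace_mul_single, ← Matrix.mul_assoc, trace_mul_single]
  simp [mcomm, Matrix.sub_apply]

lemma pt_normSq (z w : ℂ) :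
    Complex.normSq ((1 / 2 : ℂ) * (z + star w)) +
      Complex.normSq ((Complex.I / 2 : ℂ) * (star w - z))
      = (Complex.normSq z + Complex.normSq w) / 2 := by
  simp [Complex.normSq_apply, Complex.mul_re, Complex.mul_im, Complex.add_re, Complex.add_im,
    Complex.sub_re, Complex.sub_im, Complex.div_re, Complex.div_im, Complex.normSq]
  ring

lemma frob_split (M : Matrix (Fin n) (Fin n) ℂ) :
    frobSq ((1 / 2 : ℂ) • (M + Mᴴ)) + frobSq ((Complex.I / 2 : ℂ) • (Mᴴ - M)) = frobSq M := by
  rw [frobSq_eq_sum, frobSq_eq_sum, frobSq_eq_sum, ← Finset.sum_add_distrib]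
  have swap : ∑ q : Fin n × Fin n, Complex.normSq (M q.1 q.2)
      = ∑ q : Fin n × Fin n, Complex.normSq (M q.2 q.1) :=
    Fintype.sum_equiv (Equiv.prodComm _ _) _ _ (fun q => rfl)
  have main : ∀ q : Fin n × Fin n,
      Complex.normSq (((1 / 2 : ℂ) • (M + Mᴴ)) q.1 q.2)
        + Complex.normSq (((Complex.I / 2 : ℂ) • (Mᴴ - M)) q.1 q.2)
      = (Complex.normSq (M q.1 q.2) + Complex.normSq (M q.2 q.1)) / 2 := by
    intro q
    simp only [Matrix.smul_apply, Matrix.add_apply, Matrix.sub_apply,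
      Matrix.conjTranspose_apply, smul_eq_mul]
    exact pt_normSq _ _
  rw [Finset.sum_congr rfl (fun q _ => main q)]
  have hsum : ∑ q : Fin n × Fin n,
      (Complex.normSq (M q.1 q.2) + Complex.normSq (M q.2 q.1)) / 2
      = (∑ q : Fin n × Fin n, Complex.normSq (M q.1 q.2)
          + ∑ q : Fin n × Fin n, Complex.normSq (M q.2 q.1)) / 2 := by
    rw [← Finset.sum_div, Finset.sum_add_distrib]
  rw [hsum, ← swap]
  ring

/-- The matrices `[E_{ji}, A]`. -/
noncomputable def Mp (A : Matrix (Fin n) (Fin n) ℂ) (p : Fin n × Fin n) :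
    Matrix (Fin n) (Fin n) ℂ :=
  single p.2 p.1 1 * A - A * single p.2 p.1 1

lemma trace_MMH (A : Matrix (Fin n) (Fin n) ℂ) (hA : Aᴴ = A) (i j : Fin n) :
    frobSq (single j i 1 * A - A * single j i 1)
      = ((A * A) i i + (A * A) j j - A i i * A j j - A j j * A i i).re := by
  unfold frobSq
  rw [Matrix.conjTranspose_sub, Matrix.conjTranspose_mul, Matrix.conjTranspose_mul, hA,
    single_conjTranspose]
  rw [Matrix.sub_mul, Matrix.mul_sub, Matrix.mul_sub, Matrix.trace_sub, Matrix.trace_sub,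
    Matrix.trace_sub]
  have h1 : (single j i 1 * A * (A * single i j 1)).trace = (A * A) i i := by
    rw [Matrix.mul_assoc, trace_single_mul]
    rw [← Matrix.mul_assoc]
    simp
  have h2 : (single j i 1 * A * (single i j 1 * A)).trace
      = A i i * A j j := by
    rw [Matrix.mul_assoc, trace_single_mul, Matrix.mul_apply, Finset.sum_eq_single i]
    · simp
    · intro k _ hk
      simp [hk]
    · simp
  have h3 : (A * single j i 1 * (A * single i j 1)).trace
      = A j j * A i i := by
    rw [show A * single j i 1 * (A * single i j 1)
        = A * single j i 1 * A * single i j 1 from (Matrix.mul_assoc _ _ _).symm,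
      trace_mul_single, Matrix.mul_apply, Finset.sum_eq_single i]
    · simp
    · intro k _ hk
      simp [hk]
    · simp
  have h4 : (A * single j i 1 * (single i j 1 * A)).trace
      = (A * A) j j := by
    rw [show A * single j i 1 * (single i j 1 * A)
        = A * (single j i 1 * single i j 1) * A by
        rw [Matrix.mul_assoc, Matrix.mul_assoc, Matrix.mul_assoc]]
    rw [Matrix.single_mul_single_same, mul_one, Matrix.trace_mul_comm, ← Matrix.mul_assoc,
      trace_mul_single]
  rw [h1, h2, h3, h4]
  simp [Complex.sub_re, Complex.add_re]
  ring

lemma sum_frob (A : Matrix (Fin n) (Fin n) ℂ) (hA : Aᴴ = A) :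
    ∑ p : Fin n × Fin n, frobSq (Mp A p)
      = 2 * n * ((A * A).trace).re - 2 * ((A.trace) ^ 2).re := by
  have hM : ∀ p : Fin n × Fin n, frobSq (Mp A p)
      = ((A * A) p.1 p.1 + (A * A) p.2 p.2
          - A p.1 p.1 * A p.2 p.2 - A p.2 p.2 * A p.1 p.1).re :=
    fun p => trace_MMH A hA p.1 p.2
  rw [Finset.sum_congr rfl fun p _ => hM p, ← Complex.re_sum]
  have ht : A.trace = ∑ i, A i i := by simp [Matrix.trace, Matrix.diag]
  have ht2 : (A * A).trace = ∑ i, (A * A) i i := by simp [Matrix.trace, Matrix.diag]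
  have expand : ∑ p : Fin n × Fin n,
      ((A * A) p.1 p.1 + (A * A) p.2 p.2 - A p.1 p.1 * A p.2 p.2 - A p.2 p.2 * A p.1 p.1)
      = 2 * n * (∑ i, (A * A) i i) - 2 * (∑ i, A i i) ^ 2 := by
    rw [Fintype.sum_prod_type]
    simp only [Finset.sum_sub_distrib, Finset.sum_add_distrib, Finset.sum_const,
      Finset.card_univ, Fintype.card_fin, nsmul_eq_mul, ← Finset.mul_sum, ← Finset.sum_mul]
    ring
  rw [expand, ht, ht2]
  simp [Complex.sub_re, Complex.mul_re, Complex.mul_im]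

end CommBd


theorem commutator_sum_bound (n : ℕ) (hn : 1 ≤ n)
    (Q : Fin (n ^ 2) → Matrix (Fin n) (Fin n) ℂ)
    (hHerm : ∀ α, (Q α)ᴴ = Q α)
    (hON : ∀ α β, minner (Q α) (Q β) = if α = β then 1 else 0)
    (α : Fin (n ^ 2)) :
    ∑ β : Fin (n ^ 2), frobSq (mcomm (Q α) (Q β)) ≤ 2 * n := by
  classical
  open CommBd in
  set A := Q α with hAdef
  have hA : Aᴴ = A := hHerm α
  have key : ∀ β, frobSq (mcomm A (Q β)) =
      ∑ p : Fin n × Fin n,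
        ((minner (Q β) ((1 / 2 : ℂ) • (Mp A p + (Mp A p)ᴴ))) ^ 2 +
         (minner (Q β) ((Complex.I / 2 : ℂ) • ((Mp A p)ᴴ - Mp A p))) ^ 2) := by
    intro β
    rw [frobSq_eq_sum]
    refine Finset.sum_congr rfl fun p _ => ?_
    rw [minner_re _ _ (hHerm β), minner_im _ _ (hHerm β)]
    have hz : ((Q β) * Mp A p).trace = (mcomm A (Q β)) p.1 p.2 := trace_BM A (Q β) p.1 p.2
    rw [hz, Complex.normSq_apply]
    ring
  have h1 : ((A * A).trace).re = 1 := by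
    have h := hON α α
    rw [if_pos rfl] at h
    unfold minner at h
    rw [hA] at h
    exact h
  have him : A.trace.im = 0 := by
    have hst : (starRingEnd ℂ) A.trace = A.trace := by
      rw [← Complex.star_def, ← Matrix.trace_conjTranspose, hA]
    exact Complex.conj_eq_iff_im.mp hst
  have hsq : ((A.trace) ^ 2).re = (A.trace.re) ^ 2 := by
    rw [sq, Complex.mul_re, him]
    ring
  calc ∑ β : Fin (n ^ 2), frobSq (mcomm A (Q β))
      = ∑ β : Fin (n ^ 2), ∑ p : Fin n × Fin n,
          ((minner (Q β) ((1 / 2 : ℂ) • (Mp A p + (Mp A p)ᴴ))) ^ 2 +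
           (minner (Q β) ((Complex.I / 2 : ℂ) • ((Mp A p)ᴴ - Mp A p))) ^ 2) :=
        Finset.sum_congr rfl fun β _ => key β
    _ = ∑ p : Fin n × Fin n, ∑ β : Fin (n ^ 2),
          ((minner (Q β) ((1 / 2 : ℂ) • (Mp A p + (Mp A p)ᴴ))) ^ 2 +
           (minner (Q β) ((Complex.I / 2 : ℂ) • ((Mp A p)ᴴ - Mp A p))) ^ 2) :=
        Finset.sum_comm
    _ ≤ ∑ p : Fin n × Fin n,
          (frobSq ((1 / 2 : ℂ) • (Mp A p + (Mp A p)ᴴ))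
            + frobSq ((Complex.I / 2 : ℂ) • ((Mp A p)ᴴ - Mp A p))) := by
        refine Finset.sum_le_sum fun p _ => ?_
        rw [Finset.sum_add_distrib]
        exact add_le_add (bessel Q hON _) (bessel Q hON _)
    _ = ∑ p : Fin n × Fin n, frobSq (Mp A p) :=
        Finset.sum_congr rfl fun p _ => frob_split (Mp A p)
    _ = 2 * n * ((A * A).trace).re - 2 * ((A.trace) ^ 2).re := sum_frob A hA
    _ ≤ 2 * n := by
        rw [h1, hsq]
        nlinarith [sq_nonneg A.trace.re]
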